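/- arXiv:2104.13664 — 5 statements merged into one kernel-verified Lean document; each statement's English description precedes it below -/
import Mathlib

section
/- Let X be a Dedekind complete Riesz space with weak order unit e and let T be a conditional expectation operator on X with Te = e. For a net (x_α)_{α∈A} in X and an element x ∈ X, the following are equivalent: (i) for every real ε > 0, the net (T P_{(|x_α − x| − εe)^+} e) order converges to 0; (ii) for every u ∈ X with u ≥ 0, the net (T(|x_α − x| ∧ u)) order converges to 0; (iii) the net (T(|x_α − x| ∧ e)) order converges to 0. -/
/-- A net `x : A → X` order converges to `l` if there is a (nonempty, upward directed)
net `y : B → X` decreasing to `0` (i.e. antitone with infimum `0`) such that for every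
index `b` the net `x` eventually satisfies `|x a - l| ≤ y b`. -/
def OrderConvergesTo {X : Type u} [Lattice X] [AddCommGroup X]
    {A : Type v} [Preorder A] (x : A → X) (l : X) : Prop :=
  ∃ (B : Type u) (r : B → B → Prop) (y : B → X),
    Nonempty B ∧
    (∀ b, r b b) ∧
    (∀ b₁ b₂ b₃, r b₁ b₂ → r b₂ b₃ → r b₁ b₃) ∧
    (∀ b₁ b₂, ∃ b₃, r b₁ b₃ ∧ r b₂ b₃) ∧
    (∀ b₁ b₂, r b₁ b₂ → y b₂ ≤ y b₁) ∧
    IsGLB (Set.range y) 0 ∧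
    ∀ b, ∃ a₀ : A, ∀ a : A, a₀ ≤ a → |x a - l| ≤ y b

/-- The band projection associated to a positive element `w`, applied to a positive
element `z` : `P_w z = sup_{n ≥ 1} (z ⊓ n • w)`. -/
noncomputable def bandProjApply {X : Type u} [ConditionallyCompleteLattice X]
    [AddCommGroup X] (w z : X) : X :=
  ⨆ n : ℕ, z ⊓ ((n + 1) • w)

/-!
Write `z = |x a - l|` and `w = (z - ε • e)⁺`. Everything rests on the pointwise estimates
`ε • P_w e ≤ z ⊓ e ≤ ε • e + P_w e` (the left one for `0 < ε ≤ 1`: each `e ⊓ n • w` is disjoint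
from `(z - ε • e)⁻`, on which `z` falls below `ε • e`) and `z ⊓ u ≤ (u - u ⊓ n • e) + n • (z ⊓ e)`,
where `u - u ⊓ n • e ↓ 0` because `e` is a weak order unit, hence `T (u - u ⊓ n • e) ↓ 0` by order
continuity. Estimates along countably many parameters (`ε = 1 / (k + 1)`, resp. `n`) are turned
into order convergence by a diagonal net indexed by `(∀ k, B k) × ℕ`, whose value at `(φ, n)` is
the infimum over `k ≤ n` of the `k`-th bound; Dedekind completeness supplies `e / (k + 1) ↓ 0`.
-/

open Set

lemma inf_eq_zero_of_le {X : Type*} [Lattice X] [Zero X] {s t q : X} (ht : 0 ≤ t) (hq : 0 ≤ q)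
    (hts : t ≤ s) (hs : s ⊓ q = 0) : t ⊓ q = 0 :=
  le_antisymm (hs ▸ inf_le_inf_right q hts) (le_inf ht hq)

section LatticeOrderedGroup

variable {X : Type*} [Lattice X] [AddCommGroup X] [CovariantClass X X (· + ·) (· ≤ ·)]

lemma add_inf_le_inf_add_inf {a b c : X} (ha : 0 ≤ a) (hb : 0 ≤ b) (hc : 0 ≤ c) :
    (a + b) ⊓ c ≤ a ⊓ c + b ⊓ c := by
  rw [add_inf, inf_add, inf_add]
  have hc' : c ≤ c + b := le_add_of_nonneg_right hb
  exact le_inf (le_inf inf_le_left (inf_le_right.trans hc'))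
    (le_inf (inf_le_right.trans (le_add_of_nonneg_left ha))
      (inf_le_right.trans (le_add_of_nonneg_right hc)))

lemma nsmul_inf_eq_zero {a c : X} (ha : 0 ≤ a) (hc : 0 ≤ c) (h : a ⊓ c = 0) (n : ℕ) :
    (n • a) ⊓ c = 0 := by
  induction n with
  | zero => simpa using hc
  | succ n ih =>
    refine le_antisymm ?_ (le_inf (nsmul_nonneg ha _) hc)
    calc ((n + 1) • a) ⊓ c ≤ (n • a) ⊓ c + a ⊓ c := by
          rw [succ_nsmul]; exact add_inf_le_inf_add_inf (nsmul_nonneg ha n) ha hc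
      _ = 0 := by rw [ih, h, add_zero]

lemma inf_nsmul_le_nsmul_inf {a c : X} (ha : 0 ≤ a) (hc : 0 ≤ c) (n : ℕ) :
    a ⊓ n • c ≤ n • (a ⊓ c) := by
  induction n with
  | zero => simp
  | succ n ih =>
    calc a ⊓ (n + 1) • c ≤ n • c ⊓ a + c ⊓ a := by
          rw [succ_nsmul, inf_comm]; exact add_inf_le_inf_add_inf (nsmul_nonneg hc n) hc ha
      _ ≤ n • (a ⊓ c) + a ⊓ c := by rw [inf_comm, inf_comm c]; exact add_le_add ih le_rfl
      _ = (n + 1) • (a ⊓ c) := (succ_nsmul _ n).symm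

lemma inf_le_sub_inf_nsmul_add_nsmul_inf {z e : X} (hz : 0 ≤ z) (he : 0 ≤ e) (u : X) (n : ℕ) :
    z ⊓ u ≤ (u - u ⊓ n • e) + n • (z ⊓ e) := by
  rw [← sub_le_iff_le_add', inf_sub, sub_sub_cancel]
  calc (z - (u - u ⊓ n • e)) ⊓ (u ⊓ n • e) ≤ z ⊓ n • e :=
        inf_le_inf (sub_le_self _ (sub_nonneg.2 inf_le_left)) inf_le_right
    _ ≤ n • (z ⊓ e) := inf_nsmul_le_nsmul_inf hz he n

lemma add_eq_sup_of_inf_eq_zero {a b : X} (h : a ⊓ b = 0) : a + b = a ⊔ b := by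
  rw [← inf_add_sup, h, zero_add]

end LatticeOrderedGroup

section RieszSpace

variable {X : Type*} [Lattice X] [AddCommGroup X] [CovariantClass X X (· + ·) (· ≤ ·)]
  [Module ℝ X] [PosSMulMono ℝ X]

lemma smul_le_smul_of_nonneg_right' {a b : ℝ} (hab : a ≤ b) {x : X} (hx : 0 ≤ x) :
    a • x ≤ b • x := by
  have := smul_nonneg (sub_nonneg.2 hab) hx
  rwa [sub_smul, sub_nonneg] at this

lemma smul_le_self_of_le_one {ε : ℝ} (hε : ε ≤ 1) {a : X} (ha : 0 ≤ a) : ε • a ≤ a := by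
  simpa using smul_le_smul_of_nonneg_right' hε ha

lemma smul_le_of_inf_negPart_eq_zero {ε : ℝ} (hε0 : 0 ≤ ε) (hε1 : ε ≤ 1) {z e t : X}
    (hz : 0 ≤ z) (he : 0 ≤ e) (ht : 0 ≤ t) (hte : t ≤ e) (htq : t ⊓ (z - ε • e)⁻ = 0) :
    ε • t ≤ z := by
  have hq : (z - ε • e)⁻ ≤ ε • e := by
    rw [negPart_def, neg_sub]
    exact sup_le (sub_le_self _ hz) (smul_nonneg hε0 he)
  have hεe : ε • e ≤ z + (z - ε • e)⁻ :=
    calc ε • e ≤ ε • e + (z - ε • e)⁺ := le_add_of_nonneg_right (posPart_nonneg _)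
      _ = ε • e + ((z - ε • e)⁺ - (z - ε • e)⁻) + (z - ε • e)⁻ := by abel
      _ = z + (z - ε • e)⁻ := by rw [posPart_sub_negPart]; abel
  have hdisj : (ε • t) ⊓ (z - ε • e)⁻ = 0 := inf_eq_zero_of_le (smul_nonneg hε0 ht)
    (negPart_nonneg _) (smul_le_self_of_le_one hε1 ht) htq
  refine le_of_add_le_add_right (a := (z - ε • e)⁻) ?_
  calc ε • t + (z - ε • e)⁻ = ε • t ⊔ (z - ε • e)⁻ := add_eq_sup_of_inf_eq_zero hdisj
    _ ≤ ε • e := sup_le (smul_le_smul_of_nonneg_left hte hε0) hq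
    _ ≤ z + (z - ε • e)⁻ := hεe

end RieszSpace

section DedekindComplete

variable {X : Type*} [ConditionallyCompleteLattice X] [AddCommGroup X]
  [CovariantClass X X (· + ·) (· ≤ ·)]

lemma nonpos_of_forall_nsmul_le {p e : X} (h : ∀ n : ℕ, n • p ≤ e) : p ≤ 0 := by
  have hbdd : BddAbove (range fun n : ℕ => n • p) := ⟨e, forall_mem_range.2 h⟩
  set s := ⨆ n : ℕ, n • p
  have : s ≤ s - p := ciSup_le fun n =>
    le_sub_iff_add_le.2 (succ_nsmul p n ▸ le_ciSup hbdd (n + 1))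
  simpa using this

lemma ciSup_inf_nsmul_eq_self {e u : X} (he : 0 ≤ e)
    (hwu : ∀ z : X, 0 ≤ z → z ⊓ e = 0 → z = 0) :
    ⨆ n : ℕ, u ⊓ n • e = u := by
  have hbdd : BddAbove (range fun n : ℕ => u ⊓ n • e) :=
    ⟨u, forall_mem_range.2 fun _ => inf_le_left⟩
  set s := ⨆ n : ℕ, u ⊓ n • e
  have hsu : s ≤ u := ciSup_le fun _ => inf_le_left
  have hd : 0 ≤ u - s := sub_nonneg.2 hsu
  have hstep : ∀ n : ℕ, u ⊓ n • e + (u - s) ⊓ e ≤ s := fun n =>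
    calc u ⊓ n • e + (u - s) ⊓ e ≤ (u ⊓ n • e + (u - s)) ⊓ (n • e + e) :=
          le_inf (add_le_add le_rfl inf_le_left) (add_le_add inf_le_right inf_le_right)
      _ ≤ u ⊓ (n + 1) • e := by
          rw [succ_nsmul]
          refine inf_le_inf_right _ ?_
          calc u ⊓ n • e + (u - s) ≤ s + (u - s) := add_le_add (le_ciSup hbdd n) le_rfl
            _ = u := add_sub_cancel s u
      _ ≤ s := le_ciSup hbdd (n + 1)
  have hde : (u - s) ⊓ e ≤ 0 := by
    have : s ≤ s - (u - s) ⊓ e := ciSup_le fun n => le_sub_iff_add_le.2 (hstep n)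
    simpa using this
  have := hwu _ hd (le_antisymm hde (le_inf hd he))
  exact le_antisymm hsu (sub_eq_zero.1 this).le

lemma isGLB_range_sub_inf_nsmul {e : X} (he : 0 ≤ e)
    (hwu : ∀ z : X, 0 ≤ z → z ⊓ e = 0 → z = 0) (u : X) :
    IsGLB (range fun n : ℕ => u - u ⊓ n • e) 0 := by
  refine ⟨forall_mem_range.2 fun _ => sub_nonneg.2 inf_le_left, fun m hm => ?_⟩
  have : u ≤ u - m :=
    calc u = ⨆ n : ℕ, u ⊓ n • e := (ciSup_inf_nsmul_eq_self he hwu).symm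
      _ ≤ u - m := ciSup_le fun n => le_sub_comm.1 (hm ⟨n, rfl⟩)
  simpa using this

lemma bandProjApply_nonneg {w z : X} (hw : 0 ≤ w) (hz : 0 ≤ z) : 0 ≤ bandProjApply w z :=
  le_ciSup_of_le ⟨z, forall_mem_range.2 fun _ => inf_le_left⟩ 0 (le_inf hz (nsmul_nonneg hw _))

lemma bandProjApply_mono {w w' : X} (h : w ≤ w') (z : X) :
    bandProjApply w z ≤ bandProjApply w' z :=
  ciSup_mono ⟨z, forall_mem_range.2 fun _ => inf_le_left⟩
    fun _ => inf_le_inf_left z (nsmul_le_nsmul_right h _)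

end DedekindComplete

section DedekindCompleteRieszSpace

variable {X : Type*} [ConditionallyCompleteLattice X] [AddCommGroup X]
  [CovariantClass X X (· + ·) (· ≤ ·)] [Module ℝ X] [PosSMulMono ℝ X]

lemma isGLB_range_inv_smul {e : X} (he : 0 ≤ e) :
    IsGLB (range fun n : ℕ => ((n : ℝ) + 1)⁻¹ • e) 0 := by
  refine ⟨forall_mem_range.2 fun n => smul_nonneg (by positivity) he, fun m hm => ?_⟩
  refine nonpos_of_forall_nsmul_le (e := e) fun n => ?_
  cases n with
  | zero => simpa using he
  | succ n =>
    rw [← Nat.cast_smul_eq_nsmul ℝ, Nat.cast_succ]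
    exact (le_inv_smul_iff_of_pos (by positivity)).1 (hm ⟨n, rfl⟩)

lemma bandProjApply_le_inv_smul_inf {ε : ℝ} (hε0 : 0 < ε) (hε1 : ε ≤ 1) {z e : X}
    (hz : 0 ≤ z) (he : 0 ≤ e) :
    bandProjApply ((z - ε • e) ⊔ 0) e ≤ ε⁻¹ • (z ⊓ e) := by
  rw [← posPart_def]
  refine ciSup_le fun n => (le_inv_smul_iff_of_pos hε0).2 ?_
  have ht : 0 ≤ e ⊓ (n + 1) • (z - ε • e)⁺ := le_inf he (nsmul_nonneg (posPart_nonneg _) _)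
  have hdisj : e ⊓ (n + 1) • (z - ε • e)⁺ ⊓ (z - ε • e)⁻ = 0 :=
    inf_eq_zero_of_le ht (negPart_nonneg _) inf_le_right <| nsmul_inf_eq_zero
      (posPart_nonneg _) (negPart_nonneg _) (posPart_inf_negPart_eq_zero _) _
  exact le_inf (smul_le_of_inf_negPart_eq_zero hε0.le hε1 hz he ht inf_le_left hdisj)
    ((smul_le_self_of_le_one hε1 ht).trans inf_le_left)

lemma inf_le_smul_add_bandProjApply {ε : ℝ} (hε : 0 ≤ ε) {z e : X} (he : 0 ≤ e) :
    z ⊓ e ≤ ε • e + bandProjApply ((z - ε • e) ⊔ 0) e := by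
  rw [← sub_le_iff_le_add', inf_sub]
  calc (z - ε • e) ⊓ (e - ε • e) ≤ e ⊓ ((z - ε • e) ⊔ 0) :=
        inf_comm (z - ε • e) _ ▸ inf_le_inf (sub_le_self e (smul_nonneg hε he)) le_sup_left
    _ ≤ _ := by
        unfold bandProjApply
        simpa using le_ciSup (f := fun n : ℕ => e ⊓ ((n + 1) • ((z - ε • e) ⊔ 0)))
          ⟨e, forall_mem_range.2 fun _ => inf_le_left⟩ 0

end DedekindCompleteRieszSpace

lemma abs_smul_le_smul_abs {X : Type*} [Lattice X] [AddCommGroup X] [Module ℝ X]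
    [PosSMulMono ℝ X] {c : ℝ} (hc : 0 ≤ c) (x : X) : |c • x| ≤ c • |x| :=
  abs_le'.2 ⟨smul_le_smul_of_nonneg_left (le_abs_self x) hc,
    smul_neg c x ▸ smul_le_smul_of_nonneg_left (neg_le_abs x) hc⟩

section OrderConvergence

variable {X : Type*} [Lattice X] [AddCommGroup X] {A : Type*} [Preorder A]

lemma OrderConvergesTo.of_le [CovariantClass X X (· + ·) (· ≤ ·)] {f g : A → X}
    (hf : ∀ a, 0 ≤ f a) (hfg : ∀ a, f a ≤ g a)
    (hg : OrderConvergesTo g 0) : OrderConvergesTo f 0 := by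
  obtain ⟨B, r, y, hB, hrefl, htrans, hdir, hanti, hglb, hev⟩ := hg
  refine ⟨B, r, y, hB, hrefl, htrans, hdir, hanti, hglb, fun b => ?_⟩
  obtain ⟨a₀, ha₀⟩ := hev b
  refine ⟨a₀, fun a ha => ?_⟩
  rw [sub_zero, abs_of_nonneg (hf a)]
  exact (hfg a).trans ((le_abs_self _).trans (by simpa using ha₀ a ha))

lemma OrderConvergesTo.const_smul [Module ℝ X] [PosSMulMono ℝ X] {c : ℝ} (hc : 0 ≤ c)
    {g : A → X} (hg : OrderConvergesTo g 0) : OrderConvergesTo (fun a => c • g a) 0 := by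
  obtain ⟨B, r, y, hB, hrefl, htrans, hdir, hanti, hglb, hev⟩ := hg
  refine ⟨B, r, fun b => c • y b, hB, hrefl, htrans, hdir,
    fun b₁ b₂ h => smul_le_smul_of_nonneg_left (hanti b₁ b₂ h) hc,
    ⟨forall_mem_range.2 fun b => smul_nonneg hc (hglb.1 ⟨b, rfl⟩), fun m hm => ?_⟩, fun b => ?_⟩
  · rcases hc.eq_or_lt with rfl | hc
    · obtain ⟨b⟩ := hB
      simpa using hm ⟨b, rfl⟩
    · have : c⁻¹ • m ≤ 0 := hglb.2 <| forall_mem_range.2 fun b =>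
        (inv_smul_le_iff_of_pos hc).2 (hm ⟨b, rfl⟩)
      simpa using (inv_smul_le_iff_of_pos hc).1 this
  · obtain ⟨a₀, ha₀⟩ := hev b
    refine ⟨a₀, fun a ha => ?_⟩
    simp only [sub_zero] at ha₀ ⊢
    exact (abs_smul_le_smul_abs hc _).trans (smul_le_smul_of_nonneg_left (ha₀ a ha) hc)

lemma OrderConvergesTo.of_le_add [CovariantClass X X (· + ·) (· ≤ ·)]
    (hA : ∀ a b : A, ∃ c, a ≤ c ∧ b ≤ c) {f : A → X}
    (hf : ∀ a, 0 ≤ f a) {c : ℕ → X} (hc : IsGLB (range c) 0) {h : ℕ → A → X}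
    (hh : ∀ k, OrderConvergesTo (h k) 0) (hfh : ∀ k a, f a ≤ c k + h k a) :
    OrderConvergesTo f 0 := by
  classical
  choose B r y hB hrefl htrans hdir hanti hglb hev using hh
  have : IsDirectedOrder A := ⟨hA⟩
  have : Nonempty A := ⟨(hev 0 (hB 0).some).choose⟩
  have hfin (φ : ∀ k, B k) (n : ℕ) :
      ∃ a₀, ∀ a, a₀ ≤ a → ∀ k ∈ Finset.range (n + 1), f a ≤ c k + y k (φ k) := by
    refine Filter.eventually_atTop.1 ((Filter.eventually_all_finset _).2 fun k _ => ?_)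
    obtain ⟨a₀, ha₀⟩ := hev k (φ k)
    refine Filter.eventually_atTop.2 ⟨a₀, fun a ha => (hfh k a).trans (add_le_add le_rfl ?_)⟩
    simpa using (le_abs_self _).trans (ha₀ a ha)
  refine ⟨(∀ k, B k) × ℕ, fun p q => (∀ k, r k (p.1 k) (q.1 k)) ∧ p.2 ≤ q.2,
    fun p => (Finset.range (p.2 + 1)).inf' Finset.nonempty_range_add_one
      fun k => c k + y k (p.1 k),
    ⟨fun k => (hB k).some, 0⟩, fun p => ⟨fun k => hrefl k _, le_rfl⟩,
    fun p q s hpq hqs => ⟨fun k => htrans k _ _ _ (hpq.1 k) (hqs.1 k), hpq.2.trans hqs.2⟩,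
    fun p q => ?_, fun p q hpq => ?_, ⟨?_, fun m hm => ?_⟩, fun p => ?_⟩
  · choose φ hφ using fun k => hdir k (p.1 k) (q.1 k)
    exact ⟨⟨φ, max p.2 q.2⟩, ⟨fun k => (hφ k).1, le_max_left _ _⟩,
      ⟨fun k => (hφ k).2, le_max_right _ _⟩⟩
  · refine Finset.le_inf' _ _ fun k hk => (Finset.inf'_le _ ?_).trans
      (add_le_add le_rfl (hanti k _ _ (hpq.1 k)))
    simp only [Finset.mem_range] at hk ⊢
    omega
  · rintro _ ⟨p, rfl⟩
    exact Finset.le_inf' _ _ fun k _ =>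
      add_nonneg (hc.1 ⟨k, rfl⟩) (hglb k |>.1 ⟨p.1 k, rfl⟩)
  · -- testing at `(Function.update _ k b, k)` bounds `m - c k` by every `y k b`
    refine hc.2 (forall_mem_range.2 fun k => sub_nonpos.1 <| (hglb k).2 <|
      forall_mem_range.2 fun b => ?_)
    have := hm ⟨(Function.update (fun j => (hB j).some) k b, k), rfl⟩
    rw [sub_le_iff_le_add']
    simpa using this.trans (Finset.inf'_le _ (Finset.self_mem_range_succ k))
  · obtain ⟨a₀, ha₀⟩ := hfin p.1 p.2
    refine ⟨a₀, fun a ha => ?_⟩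
    rw [sub_zero, abs_of_nonneg (hf a)]
    exact Finset.le_inf' _ _ (ha₀ a ha)

end OrderConvergence

lemma LinearMap.monotone_of_map_nonneg {R M N : Type*} [Semiring R]
    [AddCommGroup M] [PartialOrder M] [CovariantClass M M (· + ·) (· ≤ ·)] [Module R M]
    [AddCommGroup N] [PartialOrder N] [CovariantClass N N (· + ·) (· ≤ ·)] [Module R N]
    (T : M →ₗ[R] N) (hT : ∀ z, 0 ≤ z → 0 ≤ T z) : Monotone T := fun a b h => by
  simpa using hT (b - a) (sub_nonneg.2 h)

section ConditionalExpectation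

variable {X : Type*} [ConditionallyCompleteLattice X] [AddCommGroup X]
  [CovariantClass X X (· + ·) (· ≤ ·)] [Module ℝ X] [PosSMulMono ℝ X]
  {e : X} {T : X →ₗ[ℝ] X} {A : Type*} [Preorder A] {z : A → X}

lemma orderConvergesTo_bandProjApply_of_inf (he : 0 ≤ e) (hT : ∀ z, 0 ≤ z → 0 ≤ T z)
    (hz : ∀ a, 0 ≤ z a) (h : OrderConvergesTo (fun a => T (z a ⊓ e)) 0) {ε : ℝ} (hε : 0 < ε) :
    OrderConvergesTo (fun a => T (bandProjApply ((z a - ε • e) ⊔ 0) e)) 0 := by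
  have hε' : 0 < min ε 1 := lt_min hε one_pos
  refine (h.const_smul (inv_nonneg.2 hε'.le)).of_le
    (fun a => hT _ (bandProjApply_nonneg le_sup_right he)) fun a => ?_
  have hmono := T.monotone_of_map_nonneg hT
  calc T (bandProjApply ((z a - ε • e) ⊔ 0) e)
      ≤ T (bandProjApply ((z a - min ε 1 • e) ⊔ 0) e) :=
        hmono <| bandProjApply_mono (sup_le_sup_right (sub_le_sub_left
          (smul_le_smul_of_nonneg_right' (min_le_left _ _) he) _) _) e
    _ ≤ T ((min ε 1)⁻¹ • (z a ⊓ e)) :=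
        hmono (bandProjApply_le_inv_smul_inf hε' (min_le_right _ _) (hz a) he)
    _ = (min ε 1)⁻¹ • T (z a ⊓ e) := map_smul T _ _

lemma orderConvergesTo_inf_of_bandProjApply (hA : ∀ a b : A, ∃ c, a ≤ c ∧ b ≤ c)
    (he : 0 ≤ e) (hT : ∀ z, 0 ≤ z → 0 ≤ T z) (hTe : T e = e) (hz : ∀ a, 0 ≤ z a)
    (h : ∀ ε : ℝ, 0 < ε →
      OrderConvergesTo (fun a => T (bandProjApply ((z a - ε • e) ⊔ 0) e)) 0) :
    OrderConvergesTo (fun a => T (z a ⊓ e)) 0 := by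
  refine .of_le_add hA (fun a => hT _ (le_inf (hz a) he)) (isGLB_range_inv_smul he)
    (fun k => h ((k : ℝ) + 1)⁻¹ (by positivity)) fun k a => ?_
  have := T.monotone_of_map_nonneg hT <|
    inf_le_smul_add_bandProjApply (z := z a) (ε := ((k : ℝ) + 1)⁻¹) (by positivity) he
  rwa [map_add, map_smul, hTe] at this

lemma orderConvergesTo_inf_of_inf_weakUnit (hA : ∀ a b : A, ∃ c, a ≤ c ∧ b ≤ c)
    (he : 0 ≤ e) (hwu : ∀ z : X, 0 ≤ z → z ⊓ e = 0 → z = 0) (hT : ∀ z, 0 ≤ z → 0 ≤ T z)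
    (hTcont : ∀ S : Set X, S.Nonempty → DirectedOn (· ≥ ·) S → IsGLB S 0 →
      IsGLB (T '' S) 0)
    (hz : ∀ a, 0 ≤ z a) (h : OrderConvergesTo (fun a => T (z a ⊓ e)) 0)
    {u : X} (hu : 0 ≤ u) :
    OrderConvergesTo (fun a => T (z a ⊓ u)) 0 := by
  have hanti : Antitone fun n : ℕ => u - u ⊓ n • e := fun m n hmn =>
    sub_le_sub_left (inf_le_inf_left u (nsmul_le_nsmul_left he hmn)) u
  have hTg := hTcont _ (range_nonempty _) (directedOn_range.2 hanti.directed_ge)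
    (isGLB_range_sub_inf_nsmul he hwu u)
  rw [← range_comp] at hTg
  refine .of_le_add hA (fun a => hT _ (le_inf (hz a) hu)) hTg
    (fun k => h.const_smul (Nat.cast_nonneg k)) fun k a => ?_
  calc T (z a ⊓ u) ≤ T ((u - u ⊓ k • e) + k • (z a ⊓ e)) :=
        T.monotone_of_map_nonneg hT (inf_le_sub_inf_nsmul_add_nsmul_inf (hz a) he u k)
    _ = _ := by simp only [map_add, map_nsmul, Function.comp_apply, Nat.cast_smul_eq_nsmul]

end ConditionalExpectation

theorem stmt0_general {X : Type u} [ConditionallyCompleteLattice X] [AddCommGroup X]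
    [CovariantClass X X (· + ·) (· ≤ ·)] [Module ℝ X] [PosSMulMono ℝ X]
    -- weak order unit
    (e : X) (he : 0 < e) (hwu : ∀ z : X, 0 ≤ z → z ⊓ e = 0 → z = 0)
    -- conditional expectation operator with `T e = e`
    (T : X →ₗ[ℝ] X)
    (hTpos : ∀ z : X, 0 ≤ z → 0 ≤ T z)
    (hTcont : ∀ S : Set X, S.Nonempty → DirectedOn (· ≥ ·) S → IsGLB S 0 →
      IsGLB (T '' S) 0)
    (hTe : T e = e)
    -- a net in `X`
    {A : Type v} [Preorder A] (hA : ∀ a b : A, ∃ c, a ≤ c ∧ b ≤ c)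
    (x : A → X) (l : X) :
    ((∀ ε : ℝ, 0 < ε →
        OrderConvergesTo
          (fun a => T (bandProjApply ((|x a - l| - ε • e) ⊔ 0) e)) (0 : X)) ↔
      (∀ u : X, 0 ≤ u → OrderConvergesTo (fun a => T (|x a - l| ⊓ u)) (0 : X))) ∧
    ((∀ u : X, 0 ≤ u → OrderConvergesTo (fun a => T (|x a - l| ⊓ u)) (0 : X)) ↔
      OrderConvergesTo (fun a => T (|x a - l| ⊓ e)) (0 : X)) := by
  have hz : ∀ a, 0 ≤ |x a - l| := fun a => abs_nonneg _
  have inf_of_inf_e (h : OrderConvergesTo (fun a => T (|x a - l| ⊓ e)) 0) (u : X) (hu : 0 ≤ u) :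
      OrderConvergesTo (fun a => T (|x a - l| ⊓ u)) 0 :=
    orderConvergesTo_inf_of_inf_weakUnit hA he.le hwu hTpos hTcont hz h hu
  exact ⟨⟨fun h => inf_of_inf_e (orderConvergesTo_inf_of_bandProjApply hA he.le hTpos hTe hz h),
      fun h _ hε => orderConvergesTo_bandProjApply_of_inf he.le hTpos hz (h e he.le) hε⟩,
    ⟨fun h => h e he.le, inf_of_inf_e⟩⟩

theorem stmt0 {X : Type u} [ConditionallyCompleteLattice X] [AddCommGroup X]
    [CovariantClass X X (· + ·) (· ≤ ·)] [Module ℝ X] [PosSMulMono ℝ X]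
    -- weak order unit
    (e : X) (he : 0 < e) (hwu : ∀ z : X, 0 ≤ z → z ⊓ e = 0 → z = 0)
    -- conditional expectation operator with `T e = e`
    (T : X →ₗ[ℝ] X)
    (hTpos : ∀ z : X, 0 ≤ z → 0 ≤ T z)
    (hTstrict : ∀ z : X, 0 ≤ z → T z = 0 → z = 0)
    (hTcont : ∀ S : Set X, S.Nonempty → DirectedOn (· ≥ ·) S → IsGLB S 0 →
      IsGLB (T '' S) 0)
    (hTidem : ∀ z : X, T (T z) = T z)
    (hTe : T e = e)
    -- a net in `X`
    {A : Type v} [Preorder A] [Nonempty A] (hA : ∀ a b : A, ∃ c, a ≤ c ∧ b ≤ c)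
    (x : A → X) (l : X) :
    ((∀ ε : ℝ, 0 < ε →
        OrderConvergesTo
          (fun a => T (bandProjApply ((|x a - l| - ε • e) ⊔ 0) e)) (0 : X)) ↔
      (∀ u : X, 0 ≤ u → OrderConvergesTo (fun a => T (|x a - l| ⊓ u)) (0 : X))) ∧
    ((∀ u : X, 0 ≤ u → OrderConvergesTo (fun a => T (|x a - l| ⊓ u)) (0 : X)) ↔
      OrderConvergesTo (fun a => T (|x a - l| ⊓ e)) (0 : X)) :=
  stmt0_general e he hwu T hTpos hTcont hTe hA x l
end

section
/- Let X be a Dedekind complete Riesz space with weak order unit e and let T be a conditional expectation operator on X with Te = e. If (x_α) is a decreasing net of positive elements of X such that the net (T(x_α ∧ e)) order converges to 0, then inf_α x_α = 0, i.e. x_α ↓ 0. -/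
theorem stmt1 {X : Type u} [ConditionallyCompleteLattice X] [AddCommGroup X]
    [CovariantClass X X (· + ·) (· ≤ ·)] [Module ℝ X] [PosSMulMono ℝ X]
    -- weak order unit
    (e : X) (he : 0 < e) (hwu : ∀ z : X, 0 ≤ z → z ⊓ e = 0 → z = 0)
    -- conditional expectation operator with `T e = e`
    (T : X →ₗ[ℝ] X)
    (hTpos : ∀ z : X, 0 ≤ z → 0 ≤ T z)
    (hTstrict : ∀ z : X, 0 ≤ z → T z = 0 → z = 0)
    (hTcont : ∀ S : Set X, S.Nonempty → DirectedOn (· ≥ ·) S → IsGLB S 0 →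
      IsGLB (T '' S) 0)
    (hTidem : ∀ z : X, T (T z) = T z)
    (hTe : T e = e)
    -- a decreasing net of positive elements of `X`
    {A : Type v} [Preorder A] [Nonempty A] (hA : ∀ a b : A, ∃ c, a ≤ c ∧ b ≤ c)
    (x : A → X) (hxpos : ∀ a, 0 ≤ x a) (hxdec : ∀ a b : A, a ≤ b → x b ≤ x a)
    (h : OrderConvergesTo (fun a => T (x a ⊓ e)) (0 : X)) :
    IsGLB (Set.range x) 0 := by
  obtain ⟨B, r, y, ⟨b0⟩, hrefl, htrans, hdir, hanti, hglb, hev⟩ := h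
  constructor
  · rintro v ⟨a, rfl⟩
    exact hxpos a
  · intro z hz
    set w : X := z ⊔ 0 with hw
    have hwnn : 0 ≤ w := le_sup_right
    have hwlb : ∀ a, w ≤ x a := fun a => sup_le (hz ⟨a, rfl⟩) (hxpos a)
    have hTmono : ∀ u v : X, u ≤ v → T u ≤ T v := by
      intro u v huv
      have h1 : 0 ≤ T (v - u) := hTpos _ (sub_nonneg.mpr huv)
      rw [map_sub] at h1
      exact sub_nonneg.mp h1
    have key : T (w ⊓ e) ≤ 0 := by
      apply hglb.2
      rintro _ ⟨b, rfl⟩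
      obtain ⟨a₀, ha₀⟩ := hev b
      have h1 := ha₀ a₀ le_rfl
      have h2 : T (w ⊓ e) ≤ T (x a₀ ⊓ e) :=
        hTmono _ _ (inf_le_inf_right e (hwlb a₀))
      calc T (w ⊓ e) ≤ T (x a₀ ⊓ e) := h2
        _ ≤ |T (x a₀ ⊓ e) - 0| := by rw [sub_zero]; exact le_abs_self _
        _ ≤ y b := h1
    have hTz : T (w ⊓ e) = 0 :=
      le_antisymm key (hTpos _ (le_inf hwnn he.le))
    have hinf : w ⊓ e = 0 := hTstrict _ (le_inf hwnn he.le) hTz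
    have : w = 0 := hwu w hwnn hinf
    calc z ≤ w := le_sup_left
      _ = 0 := this
end

section
/- Let X be a Dedekind complete Riesz space with weak order unit e, let T be a conditional expectation operator on X with Te = e, and assume X is T-universally complete. Let (x_n) be an order bounded sequence of positive elements of X such that the partial sums ∑_{k=1}^{n} T x_k, n ≥ 1, are order bounded in X. Then lim sup_n x_n = 0, that is, inf_{n≥1} sup_{k≥n} x_k = 0. -/
/-!
The partial sums `y n = ∑_{k<n} x k` are increasing and `T y n = ∑_{k<n} T x k` is order bounded,
so `T`-universal completeness gives `s = sup_n y n`. Every tail term satisfies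
`x (n + k) ≤ y (n + k + 1) - y n ≤ s - y n`, hence `L := inf_n sup_k x (n + k)` satisfies
`y n ≤ s - L` for all `n`, so `s ≤ s - L` and `L ≤ 0`.
-/

open Finset

section PartialSums

variable {X : Type*} [AddCommGroup X] [ConditionallyCompleteLattice X] [AddLeftMono X]
  {x : ℕ → X} {s : X}

lemma monotone_sum_range_of_nonneg (hx : ∀ n, 0 ≤ x n) :
    Monotone fun n => ∑ k ∈ range n, x k :=
  monotone_nat_of_le_succ fun n => by
    simpa only [sum_range_succ] using le_add_of_nonneg_right (hx n)

lemma le_sub_sum_range_of_isLUB (hx : ∀ n, 0 ≤ x n)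
    (hs : IsLUB (Set.range fun n => ∑ k ∈ range n, x k) s) (n k : ℕ) :
    x (n + k) ≤ s - ∑ i ∈ range n, x i := by
  have hmono := monotone_sum_range_of_nonneg hx
  refine le_sub_iff_add_le'.2 ?_
  calc ∑ i ∈ range n, x i + x (n + k)
      ≤ ∑ i ∈ range (n + k), x i + x (n + k) := add_le_add_left (hmono (n.le_add_right k)) _
    _ = ∑ i ∈ range (n + k + 1), x i := (sum_range_succ x (n + k)).symm
    _ ≤ s := hs.1 ⟨_, rfl⟩

lemma iSup_tail_le_sub_sum_range_of_isLUB (hx : ∀ n, 0 ≤ x n)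
    (hs : IsLUB (Set.range fun n => ∑ k ∈ range n, x k) s) (n : ℕ) :
    ⨆ k, x (n + k) ≤ s - ∑ i ∈ range n, x i :=
  ciSup_le (le_sub_sum_range_of_isLUB hx hs n)

lemma iInf_iSup_tail_eq_zero_of_isLUB_sum_range (hx : ∀ n, 0 ≤ x n)
    (hs : IsLUB (Set.range fun n => ∑ k ∈ range n, x k) s) :
    ⨅ n, ⨆ k, x (n + k) = 0 := by
  set L := ⨅ n, ⨆ k, x (n + k)
  have hbdd (n : ℕ) : BddAbove (Set.range fun k => x (n + k)) :=
    ⟨_, Set.forall_mem_range.2 (le_sub_sum_range_of_isLUB hx hs n)⟩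
  have htail_nonneg (n : ℕ) : 0 ≤ ⨆ k, x (n + k) := (hx (n + 0)).trans (le_ciSup (hbdd n) 0)
  have hL_le (n : ℕ) : L ≤ s - ∑ i ∈ range n, x i :=
    (ciInf_le ⟨0, Set.forall_mem_range.2 htail_nonneg⟩ n).trans
      (iSup_tail_le_sub_sum_range_of_isLUB hx hs n)
  have hs_le : s ≤ s - L := hs.2 <| Set.forall_mem_range.2 fun n => le_sub_comm.1 (hL_le n)
  exact le_antisymm ((le_sub_self_iff s).1 hs_le) (le_ciInf htail_nonneg)

end PartialSums

theorem stmt2_general {X : Type u} [ConditionallyCompleteLattice X] [AddCommGroup X]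
    [CovariantClass X X (· + ·) (· ≤ ·)] [Module ℝ X]
    -- conditional expectation operator with `T e = e`
    (T : X →ₗ[ℝ] X)
    -- `X` is `T`-universally complete
    (hTuniv : ∀ y : ℕ → X, (∀ n, 0 ≤ y n) → Monotone y →
      (∃ b : X, ∀ n, T (y n) ≤ b) → ∃ s : X, IsLUB (Set.range y) s)
    -- an order bounded sequence of positive elements
    (x : ℕ → X) (hxpos : ∀ n, 0 ≤ x n)
    -- the partial sums `∑_{k<N} T x_k` are order bounded in `X`
    (hsum : ∃ b : X, ∀ N : ℕ, ∑ k ∈ Finset.range N, T (x k) ≤ b) :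
    (⨅ n : ℕ, ⨆ k : ℕ, x (n + k)) = 0 := by
  obtain ⟨b, hb⟩ := hsum
  obtain ⟨s, hs⟩ := hTuniv (fun n => ∑ k ∈ range n, x k) (fun n => sum_nonneg fun k _ => hxpos k)
    (monotone_sum_range_of_nonneg hxpos) ⟨b, fun n => (map_sum T x (range n)).trans_le (hb n)⟩
  exact iInf_iSup_tail_eq_zero_of_isLUB_sum_range hxpos hs

theorem stmt2 {X : Type u} [ConditionallyCompleteLattice X] [AddCommGroup X]
    [CovariantClass X X (· + ·) (· ≤ ·)] [Module ℝ X] [PosSMulMono ℝ X]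
    -- weak order unit
    (e : X) (he : 0 < e) (hwu : ∀ z : X, 0 ≤ z → z ⊓ e = 0 → z = 0)
    -- conditional expectation operator with `T e = e`
    (T : X →ₗ[ℝ] X)
    (hTpos : ∀ z : X, 0 ≤ z → 0 ≤ T z)
    (hTstrict : ∀ z : X, 0 ≤ z → T z = 0 → z = 0)
    (hTcont : ∀ S : Set X, S.Nonempty → DirectedOn (· ≥ ·) S → IsGLB S 0 →
      IsGLB (T '' S) 0)
    (hTidem : ∀ z : X, T (T z) = T z)
    (hTe : T e = e)
    -- `X` is `T`-universally complete
    (hTuniv : ∀ y : ℕ → X, (∀ n, 0 ≤ y n) → Monotone y →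
      (∃ b : X, ∀ n, T (y n) ≤ b) → ∃ s : X, IsLUB (Set.range y) s)
    -- an order bounded sequence of positive elements
    (x : ℕ → X) (hxpos : ∀ n, 0 ≤ x n) (hxbdd : ∃ b : X, ∀ n, x n ≤ b)
    -- the partial sums `∑_{k<N} T x_k` are order bounded in `X`
    (hsum : ∃ b : X, ∀ N : ℕ, ∑ k ∈ Finset.range N, T (x k) ≤ b) :
    (⨅ n : ℕ, ⨆ k : ℕ, x (n + k)) = 0 :=
  stmt2_general T hTuniv x hxpos hsum
end

section
/- Let X be a Dedekind complete Riesz space with weak order unit e and let T be a conditional expectation operator on X with Te = e. Let (x_n) be a sequence in X and for each n set d_n = sup_{k≥0}(|x_{n+k} − x_n| ∧ e) (this supremum exists since the set is bounded above by e). If the sequence (T d_n) order converges to 0, then inf_{n≥1} sup_{p,q≥n}(|x_p − x_q| ∧ e) = 0, i.e. the sequence sup_{p,q≥n}(|x_p − x_q| ∧ e) decreases to 0. -/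
lemma inf_add_le_aux {X : Type u} [Lattice X] [AddCommGroup X]
    [CovariantClass X X (· + ·) (· ≤ ·)]
    (a b e : X) (ha : 0 ≤ a) (hb : 0 ≤ b) (he : 0 ≤ e) :
    (a + b) ⊓ e ≤ a ⊓ e + b ⊓ e := by
  have h1 : a ⊓ e + b ⊓ e = ((a + b) ⊓ (e + b)) ⊓ ((a + e) ⊓ (e + e)) := by
    rw [add_inf, inf_add, inf_add]
  rw [h1]
  refine le_inf (le_inf inf_le_left (inf_le_right.trans (le_add_of_nonneg_right hb)))
    (le_inf (inf_le_right.trans ?_) (inf_le_right.trans (le_add_of_nonneg_right he)))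
  rw [add_comm]; exact le_add_of_nonneg_right ha

theorem stmt4 {X : Type u} [ConditionallyCompleteLattice X] [AddCommGroup X]
    [CovariantClass X X (· + ·) (· ≤ ·)] [Module ℝ X] [PosSMulMono ℝ X]
    -- weak order unit
    (e : X) (he : 0 < e) (hwu : ∀ z : X, 0 ≤ z → z ⊓ e = 0 → z = 0)
    -- conditional expectation operator with `T e = e`
    (T : X →ₗ[ℝ] X)
    (hTpos : ∀ z : X, 0 ≤ z → 0 ≤ T z)
    (hTstrict : ∀ z : X, 0 ≤ z → T z = 0 → z = 0)
    (hTcont : ∀ S : Set X, S.Nonempty → DirectedOn (· ≥ ·) S → IsGLB S 0 →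
      IsGLB (T '' S) 0)
    (hTidem : ∀ z : X, T (T z) = T z)
    (hTe : T e = e)
    -- a sequence in `X`, `d n = sup_{k ≥ 0} (|x (n+k) − x n| ⊓ e)`
    (x : ℕ → X) (d : ℕ → X) (hd : ∀ n, d n = ⨆ k : ℕ, |x (n + k) - x n| ⊓ e)
    -- `(T (d n))` order converges to `0`
    (h : OrderConvergesTo (fun n => T (d n)) (0 : X)) :
    -- then `sup_{p,q ≥ n} (|x p − x q| ⊓ e)` decreases to `0`
    (⨅ n : ℕ, ⨆ p : ℕ, ⨆ q : ℕ, |x (n + p) - x (n + q)| ⊓ e) = 0 := by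
  set f : ℕ → X := fun n => ⨆ p : ℕ, ⨆ q : ℕ, |x (n + p) - x (n + q)| ⊓ e with hf
  -- boundedness facts
  have hbdd_inner : ∀ n p, BddAbove (Set.range fun q : ℕ => |x (n + p) - x (n + q)| ⊓ e) := by
    intro n p
    exact ⟨e, by rintro _ ⟨q, rfl⟩; exact inf_le_right⟩
  have hbdd_outer : ∀ n, BddAbove (Set.range fun p : ℕ => ⨆ q : ℕ, |x (n + p) - x (n + q)| ⊓ e) := by
    intro n
    refine ⟨e, ?_⟩
    rintro _ ⟨p, rfl⟩
    exact ciSup_le fun q => inf_le_right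
  have hbdd_d : ∀ n, BddAbove (Set.range fun k : ℕ => |x (n + k) - x n| ⊓ e) := by
    intro n
    exact ⟨e, by rintro _ ⟨k, rfl⟩; exact inf_le_right⟩
  -- nonnegativity
  have hf_nonneg : ∀ n, 0 ≤ f n := by
    intro n
    have h0 : (0 : X) = |x (n + 0) - x (n + 0)| ⊓ e := by
      simp [abs_nonneg, inf_eq_left.mpr he.le]
    calc (0 : X) = |x (n + 0) - x (n + 0)| ⊓ e := h0
      _ ≤ ⨆ q : ℕ, |x (n + 0) - x (n + q)| ⊓ e := le_ciSup (hbdd_inner n 0) 0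
      _ ≤ f n := le_ciSup (hbdd_outer n) 0
  have hd_nonneg : ∀ n, 0 ≤ d n := by
    intro n
    rw [hd n]
    have h0 : (0 : X) = |x (n + 0) - x n| ⊓ e := by
      simp [inf_eq_left.mpr he.le]
    exact h0.le.trans (le_ciSup (hbdd_d n) 0)
  -- key estimate : f n ≤ d n + d n
  have hkey : ∀ n, f n ≤ d n + d n := by
    intro n
    refine ciSup_le fun p => ciSup_le fun q => ?_
    have habs : |x (n + p) - x (n + q)| ≤ |x (n + p) - x n| + |x (n + q) - x n| := by
      calc |x (n + p) - x (n + q)| = |(x (n + p) - x n) + (-(x (n + q) - x n))| := by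
            congr 1; abel
        _ ≤ |x (n + p) - x n| + |(-(x (n + q) - x n))| := abs_add_le _ _
        _ = |x (n + p) - x n| + |x (n + q) - x n| := by rw [abs_neg]
    calc |x (n + p) - x (n + q)| ⊓ e
        ≤ (|x (n + p) - x n| + |x (n + q) - x n|) ⊓ e :=
          inf_le_inf_right e habs
      _ ≤ |x (n + p) - x n| ⊓ e + |x (n + q) - x n| ⊓ e :=
          inf_add_le_aux _ _ _ (abs_nonneg _) (abs_nonneg _) he.le
      _ ≤ d n + d n := by
          refine add_le_add ?_ ?_
          · rw [hd n]; exact le_ciSup (hbdd_d n) p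
          · rw [hd n]; exact le_ciSup (hbdd_d n) q
  set g : X := ⨅ n : ℕ, f n with hg
  have hg_nonneg : 0 ≤ g := le_ciInf hf_nonneg
  have hg_le : ∀ n, g ≤ d n + d n := fun n =>
    (ciInf_le ⟨0, by rintro _ ⟨m, rfl⟩; exact hf_nonneg m⟩ n).trans (hkey n)
  -- use order convergence
  obtain ⟨B, r, y, hB, _, _, _, _, hglb, hconv⟩ := h
  have hTg_le : ∀ b : B, (1/2 : ℝ) • T g ≤ y b := by
    intro b
    obtain ⟨n₀, hn₀⟩ := hconv b
    have h1 : T (d n₀) ≤ y b := by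
      have := hn₀ n₀ le_rfl
      simpa using (le_abs_self (T (d n₀))).trans (by simpa using this)
    have h2 : T g ≤ y b + y b := by
      have h3 : T g ≤ T (d n₀ + d n₀) := by
        have hp := hTpos _ (sub_nonneg.mpr (hg_le n₀))
        rw [map_sub] at hp
        exact sub_nonneg.mp hp
      calc T g ≤ T (d n₀ + d n₀) := h3
        _ = T (d n₀) + T (d n₀) := by rw [map_add]
        _ ≤ y b + y b := add_le_add h1 h1
    have h4 : (1/2 : ℝ) • T g ≤ (1/2 : ℝ) • (y b + y b) :=
      smul_le_smul_of_nonneg_left h2 (by norm_num)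
    calc (1/2 : ℝ) • T g ≤ (1/2 : ℝ) • (y b + y b) := h4
      _ = y b := by rw [smul_add, ← add_smul]; norm_num
  have hlb : (1/2 : ℝ) • T g ∈ lowerBounds (Set.range y) := by
    rintro _ ⟨b, rfl⟩; exact hTg_le b
  have h5 : (1/2 : ℝ) • T g ≤ 0 := hglb.2 hlb
  have h6 : T g ≤ 0 := by
    have := smul_le_smul_of_nonneg_left h5 (by norm_num : (0:ℝ) ≤ 2)
    simpa [smul_smul] using this
  have h7 : T g = 0 := le_antisymm h6 (hTpos g hg_nonneg)
  exact hTstrict g hg_nonneg h7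
end

section
/- Let X be a Dedekind complete Riesz space, let (P_γ)_{γ∈Γ} be a family of band projections on X such that the only x ≥ 0 with P_γ x = 0 for all γ ∈ Γ is x = 0, and let (x_α)_{α∈A} be a net in X such that for every γ ∈ Γ the net (P_γ x_α)_{α∈A} is uo-convergent in X. Then (x_α) is uo-Cauchy in X: for every y ∈ X with y ≥ 0, the net (|x_α − x_β| ∧ y) indexed by (α,β) ∈ A × A (with the product directed order) order converges to 0. -/
theorem stmt5 {X : Type u} [ConditionallyCompleteLattice X] [AddCommGroup X]
    [CovariantClass X X (· + ·) (· ≤ ·)] [Module ℝ X] [PosSMulMono ℝ X]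
    -- a family of band projections
    {Γ : Type w} (P : Γ → X →ₗ[ℝ] X)
    (hPidem : ∀ γ (z : X), P γ (P γ z) = P γ z)
    (hPband : ∀ γ (z : X), 0 ≤ z → 0 ≤ P γ z ∧ P γ z ≤ z)
    -- the only positive element killed by all the `P γ` is `0`
    (hsep : ∀ z : X, 0 ≤ z → (∀ γ, P γ z = 0) → z = 0)
    -- a net in `X`
    {A : Type v} [Preorder A] [Nonempty A] (hA : ∀ a b : A, ∃ c, a ≤ c ∧ b ≤ c)
    (x : A → X)
    -- for each `γ`, the net `(P γ (x a))` is uo-convergent in `X`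
    (huo : ∀ γ, ∃ l : X, ∀ u : X, 0 ≤ u →
      OrderConvergesTo (fun a => |P γ (x a) - l| ⊓ u) (0 : X)) :
    -- then `(x a)` is uo-Cauchy in `X`
    ∀ y : X, 0 ≤ y →
      OrderConvergesTo (fun p : A × A => |x p.1 - x p.2| ⊓ y) (0 : X) := by
  -- monotonicity of the band projections
  have hPmono : ∀ γ {a b : X}, a ≤ b → P γ a ≤ P γ b := by
    intro γ a b hab
    have h := (hPband γ (b - a) (sub_nonneg.2 hab)).1
    rw [map_sub] at h
    exact sub_nonneg.1 h
  -- monotonicity of the complementary projections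
  have hQmono : ∀ γ {a b : X}, a ≤ b → a - P γ a ≤ b - P γ b := by
    intro γ a b hab
    have h := (hPband γ (b - a) (sub_nonneg.2 hab)).2
    rw [map_sub, sub_le_sub_iff] at h
    rw [sub_le_sub_iff, add_comm a (P γ b)]
    exact h
  -- band projections commute with absolute value
  have habs : ∀ γ (v : X), P γ |v| = |P γ v| := by
    intro γ v
    have h1 : (0:X) ≤ v⁺ := posPart_nonneg v
    have h2 : (0:X) ≤ v⁻ := negPart_nonneg v
    have ha : (0:X) ≤ P γ v⁺ := (hPband γ _ h1).1
    have hb : (0:X) ≤ P γ v⁻ := (hPband γ _ h2).1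
    have hinf : P γ v⁺ ⊓ P γ v⁻ = 0 :=
      le_antisymm
        (le_trans (inf_le_inf (hPband γ _ h1).2 (hPband γ _ h2).2)
          (posPart_inf_negPart_eq_zero v).le)
        (le_inf ha hb)
    have hsup : P γ v⁻ ⊔ P γ v⁺ = P γ v⁺ + P γ v⁻ := by
      have h := inf_add_sup (P γ v⁻) (P γ v⁺)
      rw [inf_comm, hinf, zero_add, add_comm] at h
      exact h
    have habs2 : |P γ v⁺ - P γ v⁻| = P γ v⁺ + P γ v⁻ := by
      have h := sup_sub_inf_eq_abs_sub (P γ v⁻) (P γ v⁺)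
      rw [inf_comm, hinf, sub_zero, hsup] at h
      exact h.symm
    calc P γ |v| = P γ (v⁺ + v⁻) := by rw [posPart_add_negPart]
      _ = P γ v⁺ + P γ v⁻ := map_add _ _ _
      _ = |P γ v⁺ - P γ v⁻| := habs2.symm
      _ = |P γ (v⁺ - v⁻)| := by rw [map_sub]
      _ = |P γ v| := by rw [posPart_sub_negPart]
  -- subadditivity of `· ⊓ c` on nonnegative elements
  have hinfadd : ∀ s t c : X, 0 ≤ s → 0 ≤ t → 0 ≤ c →
      (s + t) ⊓ c ≤ s ⊓ c + t ⊓ c := by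
    intro s t c hs ht hc
    have heq : s ⊓ c + t ⊓ c = ((s + t) ⊓ (s + c)) ⊓ ((c + t) ⊓ (c + c)) := by
      rw [inf_add s c (t ⊓ c), add_inf t c s, add_inf t c c]
    rw [heq]
    refine le_inf (le_inf inf_le_left ?_) (le_inf ?_ ?_)
    · exact inf_le_right.trans (le_add_of_nonneg_left hs)
    · exact inf_le_right.trans (le_add_of_nonneg_right ht)
    · exact inf_le_right.trans (le_add_of_nonneg_left hc)
  -- an order-continuity estimate for band projections
  have hPsSup : ∀ γ (S : Set X) (u : X), S.Nonempty → BddAbove S →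
      (∀ z ∈ S, P γ z ≤ u) → P γ (sSup S) ≤ u := by
    intro γ S u hne hbdd hub
    have hs : ∀ z ∈ S, z ≤ u + (sSup S - P γ (sSup S)) := by
      intro z hz
      have hzs : z ≤ sSup S := le_csSup hbdd hz
      calc z = P γ z + (z - P γ z) := by abel
        _ ≤ u + (sSup S - P γ (sSup S)) := add_le_add (hub z hz) (hQmono γ hzs)
    have h1 : sSup S ≤ u + (sSup S - P γ (sSup S)) := csSup_le hne hs
    have h2 : u + (sSup S - P γ (sSup S)) = (u + sSup S) - P γ (sSup S) := by abel
    rw [h2, le_sub_iff_add_le, add_comm u (sSup S)] at h1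
    exact le_of_add_le_add_left h1
  intro y hy
  set w : A × A → X := fun p => |x p.1 - x p.2| ⊓ y with hwdef
  have hw0 : ∀ p, 0 ≤ w p := fun p => le_inf (abs_nonneg _) hy
  have hwy : ∀ p, w p ≤ y := fun _ => inf_le_right
  set Tset : A → Set X := fun a => w '' {p | a ≤ p.1 ∧ a ≤ p.2} with hTsetdef
  set T : A → X := fun a => sSup (Tset a) with hTdef
  have hmem : ∀ a, w (a, a) ∈ Tset a := fun a => ⟨(a, a), ⟨le_refl a, le_refl a⟩, rfl⟩
  have hTne : ∀ a, (Tset a).Nonempty := fun a => ⟨w (a, a), hmem a⟩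
  have hTbdd : ∀ a, BddAbove (Tset a) := by
    intro a
    refine ⟨y, ?_⟩
    rintro v ⟨p, _, rfl⟩
    exact hwy p
  have hT0 : ∀ a, 0 ≤ T a := fun a => le_trans (hw0 (a, a)) (le_csSup (hTbdd a) (hmem a))
  have hTanti : ∀ a b : A, a ≤ b → T b ≤ T a := by
    intro a b hab
    refine csSup_le_csSup (hTbdd a) (hTne b) ?_
    rintro v ⟨p, hp, rfl⟩
    exact ⟨p, ⟨hab.trans hp.1, hab.trans hp.2⟩, rfl⟩
  refine ⟨{v : X // v ∈ Set.range T}, fun b₁ b₂ => b₂.1 ≤ b₁.1, fun b => b.1,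
    ⟨⟨T (Classical.arbitrary A), Set.mem_range_self _⟩⟩,
    fun b => le_refl _, fun b₁ b₂ b₃ h1 h2 => h2.trans h1, ?_, fun b₁ b₂ h => h, ?_, ?_⟩
  · -- directedness
    rintro ⟨v₁, a₁, rfl⟩ ⟨v₂, a₂, rfl⟩
    obtain ⟨c, hc₁, hc₂⟩ := hA a₁ a₂
    exact ⟨⟨T c, Set.mem_range_self c⟩, hTanti a₁ c hc₁, hTanti a₂ c hc₂⟩
  · -- IsGLB
    have hrange : Set.range (fun b : {v : X // v ∈ Set.range T} => b.1) = Set.range T := by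
      ext v
      constructor
      · rintro ⟨b, rfl⟩; exact b.2
      · rintro hv; exact ⟨⟨v, hv⟩, rfl⟩
    rw [hrange]
    constructor
    · rintro v ⟨a, rfl⟩
      exact hT0 a
    · intro c hc
      set d := c ⊔ 0 with hddef
      have hd0 : (0:X) ≤ d := le_sup_right
      have hdT : ∀ a, d ≤ T a := fun a => sup_le (hc ⟨a, rfl⟩) (hT0 a)
      have hdz : d = 0 := by
        refine hsep d hd0 ?_
        intro γ
        obtain ⟨l, hl⟩ := huo γ
        obtain ⟨B', r', y', hne', hrefl', htrans', hdir', hanti', hglb', hev'⟩ := hl y hy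
        have hy'0 : ∀ b', (0:X) ≤ y' b' := fun b' => hglb'.1 ⟨b', rfl⟩
        have key : ∀ b', P γ d ≤ y' b' + y' b' := by
          intro b'
          obtain ⟨a₀, ha₀⟩ := hev' b'
          have e1 : ∀ a, a₀ ≤ a → |P γ (x a) - l| ⊓ y ≤ y' b' := by
            intro a ha
            have h := ha₀ a ha
            rwa [sub_zero, abs_of_nonneg (le_inf (abs_nonneg _) hy)] at h
          have hub : ∀ z ∈ Tset a₀, P γ z ≤ y' b' + y' b' := by
            rintro z ⟨p, ⟨hp1, hp2⟩, rfl⟩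
            have h1 : P γ (w p) ≤ |P γ (x p.1) - P γ (x p.2)| ⊓ y := by
              refine le_inf ?_ ((hPmono γ inf_le_right).trans (hPband γ y hy).2)
              calc P γ (w p) ≤ P γ |x p.1 - x p.2| := hPmono γ inf_le_left
                _ = |P γ (x p.1 - x p.2)| := habs γ _
                _ = |P γ (x p.1) - P γ (x p.2)| := by rw [map_sub]
            have htri : |P γ (x p.1) - P γ (x p.2)| ≤
                |P γ (x p.1) - l| + |P γ (x p.2) - l| := by
              have heq : P γ (x p.1) - P γ (x p.2) =
                  (P γ (x p.1) - l) + (l - P γ (x p.2)) := by abel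
              rw [heq]
              refine (abs_add_le _ _).trans_eq ?_
              rw [← abs_neg (l - P γ (x p.2)), neg_sub]
            calc P γ (w p) ≤ |P γ (x p.1) - P γ (x p.2)| ⊓ y := h1
              _ ≤ (|P γ (x p.1) - l| + |P γ (x p.2) - l|) ⊓ y := inf_le_inf_right y htri
              _ ≤ |P γ (x p.1) - l| ⊓ y + |P γ (x p.2) - l| ⊓ y :=
                hinfadd _ _ _ (abs_nonneg _) (abs_nonneg _) hy
              _ ≤ y' b' + y' b' := add_le_add (e1 p.1 hp1) (e1 p.2 hp2)
          exact (hPmono γ (hdT a₀)).trans (hPsSup γ (Tset a₀) _ (hTne a₀) (hTbdd a₀) hub)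
        -- halving argument: P γ d ≤ 0
        have hhalf : (1/2 : ℝ) • P γ d ∈ lowerBounds (Set.range y') := by
          rintro v ⟨b', rfl⟩
          have h1 : (1/2 : ℝ) • P γ d ≤ (1/2 : ℝ) • (y' b' + y' b') :=
            smul_le_smul_of_nonneg_left (key b') (by norm_num)
          have h2 : (1/2 : ℝ) • (y' b' + y' b') = y' b' := by
            rw [← two_smul ℝ (y' b'), smul_smul]
            norm_num
          rwa [h2] at h1
        have h0 : (1/2 : ℝ) • P γ d ≤ 0 := hglb'.2 hhalf
        have h3 : P γ d ≤ 0 := by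
          have h4 : (2 : ℝ) • ((1/2 : ℝ) • P γ d) ≤ (2 : ℝ) • (0 : X) :=
            smul_le_smul_of_nonneg_left h0 (by norm_num)
          rwa [smul_smul, smul_zero, (by norm_num : (2:ℝ) * (1/2) = 1), one_smul] at h4
        exact le_antisymm h3 (hPband γ d hd0).1
      calc c ≤ d := le_sup_left
        _ = 0 := hdz
  · -- eventual bound
    rintro ⟨v, hv⟩
    obtain ⟨a, ha⟩ := hv
    refine ⟨(a, a), ?_⟩
    intro p hp
    rw [sub_zero, abs_of_nonneg (hw0 p)]
    exact (le_csSup (hTbdd a) ⟨p, ⟨hp.1, hp.2⟩, rfl⟩).trans_eq ha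
end
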